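/- arXiv:1605.04292 — 6 statements merged into one kernel-verified Lean document; each statement's English description precedes it below -/
import Mathlib

section
/- If a finite directed dependency graph with distinct commit timestamps contains a directed cycle, then it contains an exclusion window violation: there exists an edge U ← T with π(T) ≤ c(U) < c(T), where π(T) = min{ c(V) : V reachable from T by back edges (reflexively) }. -/
/-!
Let `T k` have the least timestamp on the cycle and follow the cycle backwards from `T k`.
As long as the edges traversed are back edges, `T k` stays back-edge reachable, so every
vertex `W` met this way has `π(W) ≤ c(T k)`. The walk must stop at a forward edge `U ← W`
(at the latest at `T k ← T (k + 1)`, which is forward by minimality), and there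
`π(W) ≤ c(T k) ≤ c(U) < c(W)`.
-/

/-- A back edge `T ← U`: an edge whose source/successor `U` committed before `T`. -/
def BackEdge {V : Type*} (E : V → V → Prop) (c : V → ℝ) (T U : V) : Prop :=
  E T U ∧ c U < c T

/-- SSN low watermark `π(T)`: minimum commit time over the back-edge-reachable set of `T`. -/
noncomputable def piSSN {V : Type*} (E : V → V → Prop) (c : V → ℝ) (T : V) : ℝ :=
  sInf (c '' {U | Relation.ReflTransGen (BackEdge E c) T U})

open Relation

open Fin.NatCast in
theorem Fin.reflTransGen_of_cyclic {α : Type*} {R : α → α → Prop} {n : ℕ} [NeZero n]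
    {f : Fin n → α} (hf : ∀ i, R (f i) (f (i + 1))) (i j : Fin n) :
    ReflTransGen R (f i) (f j) := by
  have reach : ∀ m : ℕ, ReflTransGen R (f i) (f (i + m)) := by
    intro m
    induction m with
    | zero => simpa using ReflTransGen.refl
    | succ m ih => simpa [add_assoc] using ih.tail (hf (i + m))
  simpa using reach (j - i).val

def ViolatesExclusionWindow {V : Type*} (E : V → V → Prop) (c : V → ℝ) (U T : V) : Prop :=
  E U T ∧ piSSN E c T ≤ c U ∧ c U < c T

section ExclusionWindow

variable {V : Type*} {E : V → V → Prop} {c : V → ℝ}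

theorem piSSN_le [Finite V] {T W : V} (h : ReflTransGen (BackEdge E c) T W) :
    piSSN E c T ≤ c W :=
  csInf_le (Set.toFinite _).bddBelow ⟨W, h, rfl⟩

theorem violatesExclusionWindow_of_reflTransGen_backEdge [Finite V] {U T W : V} (hUT : E U T)
    (hWU : c W ≤ c U) (hcUT : c U < c T) (hTW : ReflTransGen (BackEdge E c) T W) :
    ViolatesExclusionWindow E c U T :=
  ⟨hUT, (piSSN_le hTW).trans hWU, hcUT⟩

/-- If the walk has a forward edge, the last one is the violation. -/
theorem reflTransGen_backEdge_or_exists_violation [Finite V] {a b : V}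
    (h : ReflTransGen (fun u v ↦ E u v ∧ c b ≤ c u ∧ c u ≠ c v) a b) :
    ReflTransGen (BackEdge E c) a b ∨ ∃ U T, ViolatesExclusionWindow E c U T := by
  induction h using ReflTransGen.head_induction_on with
  | refl => exact Or.inl ReflTransGen.refl
  | @head u v step _ ih =>
    obtain ⟨huv, hbu, hne⟩ := step
    rcases ih with hvb | hviol
    · rcases hne.lt_or_gt with hlt | hgt
      · exact Or.inr ⟨u, v, violatesExclusionWindow_of_reflTransGen_backEdge huv hbu hlt hvb⟩
      · exact Or.inl (hvb.head ⟨huv, hgt⟩)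
    · exact Or.inr hviol

end ExclusionWindow

/-- Theorem 2 of the SSN paper: if a finite dependency graph with distinct commit
timestamps contains a directed cycle (`n ≥ 2` distinct vertices), then some edge
`U ← T` (i.e. `E U T`) violates an exclusion window: `π(T) ≤ c(U) < c(T)`. -/
theorem cycle_implies_exclusion_window_violation {V : Type*} [Fintype V]
    (E : V → V → Prop) (c : V → ℝ) (hc : Function.Injective c)
    (n : ℕ) [NeZero n] (hn : 2 ≤ n) (T : Fin n → V) (hT : Function.Injective T)
    (hcyc : ∀ i : Fin n, E (T i) (T (i + 1))) :
    ∃ U T₀ : V, E U T₀ ∧ piSSN E c T₀ ≤ c U ∧ c U < c T₀ := by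
  have hstep_ne : ∀ i : Fin n, c (T i) ≠ c (T (i + 1)) := fun i h ↦ by
    have : (1 : Fin n) = 0 := by simpa using hT (hc h)
    exact absurd (Fin.one_eq_zero_iff.mp this) (by omega)
  obtain ⟨k, hk⟩ := Finite.exists_min (c ∘ T)
  have hpath : ReflTransGen (fun u v ↦ E u v ∧ c (T k) ≤ c u ∧ c u ≠ c v) (T (k + 1)) (T k) :=
    Fin.reflTransGen_of_cyclic (fun i ↦ ⟨hcyc i, hk i, hstep_ne i⟩) _ _
  have hk_lt : c (T k) < c (T (k + 1)) := (hk (k + 1)).lt_of_ne (hstep_ne k)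
  rcases reflTransGen_backEdge_or_exists_violation hpath with hback | hviol
  · exact ⟨T k, T (k + 1),
      violatesExclusionWindow_of_reflTransGen_backEdge (hcyc k) le_rfl hk_lt hback⟩
  · exact hviol
end

section
/- A directed graph built incrementally by adding vertices in order of commit timestamp, where each newly added vertex T is admitted only if no incoming edge U ← T from an already-present vertex satisfies π(T) ≤ c(U) < c(T), is acyclic at every stage. -/
lemma piSSN_le_of_reach {V : Type*} [Fintype V] (E : V → V → Prop) (c : V → ℝ) {T U : V}
    (h : Relation.ReflTransGen (BackEdge E c) T U) : piSSN E c T ≤ c U :=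
  csInf_le (Set.Finite.bddBelow (Set.toFinite _)) ⟨U, h, rfl⟩

lemma piSSN_le_self {V : Type*} [Fintype V] (E : V → V → Prop) (c : V → ℝ) (T : V) :
    piSSN E c T ≤ c T :=
  piSSN_le_of_reach E c Relation.ReflTransGen.refl

lemma piSSN_mono_back {V : Type*} [Fintype V] (E : V → V → Prop) (c : V → ℝ) {X Y : V}
    (h : BackEdge E c X Y) : piSSN E c X ≤ piSSN E c Y := by
  refine csInf_le_csInf (Set.Finite.bddBelow (Set.toFinite _))
    ⟨c Y, Y, Relation.ReflTransGen.refl, rfl⟩ ?_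
  rintro _ ⟨U, hU, rfl⟩
  exact ⟨U, Relation.ReflTransGen.head h hU, rfl⟩

lemma piSSN_mono_backT {V : Type*} [Fintype V] (E : V → V → Prop) (c : V → ℝ) {X Y : V}
    (h : Relation.TransGen (BackEdge E c) X Y) : piSSN E c X ≤ piSSN E c Y := by
  induction h with
  | single hb => exact piSSN_mono_back E c hb
  | tail _ hb ih => exact le_trans ih (piSSN_mono_back E c hb)

lemma backTrans_lt {V : Type*} (E : V → V → Prop) (c : V → ℝ) {X Y : V}
    (h : Relation.TransGen (BackEdge E c) X Y) : c Y < c X := by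
  induction h with
  | single h => exact h.2
  | tail _ h ih => exact lt_trans h.2 ih

/-- A (self-loop-free) dependency graph built incrementally in commit-timestamp order,
where every vertex `T` is admitted only if no incoming edge `U ← T` (from an
already-present vertex, i.e. with `c U < c T`) satisfies `π(T) ≤ c(U) < c(T)`,
is acyclic at every stage (restricting to vertices with timestamp `≤ t`). -/
theorem ssn_incremental_acyclic {V : Type*} [Fintype V]
    (E : V → V → Prop) (c : V → ℝ) (hc : Function.Injective c)
    (hirr : ∀ X, ¬ E X X)
    (hok : ∀ T U, E U T → c U < c T → c U < piSSN E c T) :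
    ∀ t : ℝ, ∀ X : V, c X ≤ t →
      ¬ Relation.TransGen (fun a b => E a b ∧ c a ≤ t ∧ c b ≤ t) X X := by
  intro t X _ hcyc
  have step : ∀ a b : V, E a b →
      BackEdge E c a b ∨ piSSN E c a < piSSN E c b := by
    intro a b hab
    rcases lt_trichotomy (c a) (c b) with h | h | h
    · exact Or.inr (lt_of_le_of_lt (piSSN_le_self E c a) (hok b a hab h))
    · exact absurd hab (hc h ▸ hirr a)
    · exact Or.inl ⟨hab, h⟩
  have key : ∀ Y : V, Relation.TransGen (fun a b => E a b ∧ c a ≤ t ∧ c b ≤ t) X Y →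
      piSSN E c X < piSSN E c Y ∨ Relation.TransGen (BackEdge E c) X Y := by
    intro Y h
    induction h with
    | single h =>
      rcases step _ _ h.1 with hb | hl
      · exact Or.inr (Relation.TransGen.single hb)
      · exact Or.inl hl
    | tail _ h ih =>
      rcases step _ _ h.1 with hb | hl
      · rcases ih with hl' | hb'
        · exact Or.inl (lt_of_lt_of_le hl' (piSSN_mono_back E c hb))
        · exact Or.inr (hb'.tail hb)
      · rcases ih with hl' | hb'
        · exact Or.inl (lt_trans hl' hl)
        · exact Or.inl (lt_of_le_of_lt (piSSN_mono_backT E c hb') hl)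
  rcases key X hcyc with h | h
  · exact lt_irrefl _ h
  · exact lt_irrefl _ (backTrans_lt E c h)
end

section
/- In a directed cycle T_n ← T_1 ← … ← T_{n-1} ← T_n where T_n has the minimal commit timestamp among cycle vertices, let k be the least index with T_k ←ᵇ* T_n along the cycle's back-edge suffix; then the cycle edge entering T_k (from T_{k-1}, or from T_n if k = 1) is a forward edge, i.e., its source committed before T_k. -/
/-- Structural lemma inside the proof of SSN's Theorem 2. The cycle
`T_n ← T_1 ← … ← T_{n-1} ← T_n` is encoded as `g : ℕ → V` with `g 0 = g n = T_n`,
`g i = T_i` for `1 ≤ i ≤ n`, and edges `E (g i) (g (i+1))` for `i < n`.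
Assume `T_n = g n` has minimal timestamp among the (distinct) cycle vertices, and let
`k` be the least index in `[1, n]` such that all cycle edges from `T_k` back to `T_n`
(the back-edge suffix) are back edges, i.e. `c (g (j+1)) < c (g j)` for `k ≤ j < n`.
Then the cycle edge entering `T_k` (from `T_{k-1}`, or from `T_n` if `k = 1`) is a
forward edge: its source committed before `T_k`. -/
theorem back_edge_suffix_entered_by_forward_edge {V : Type*}
    (E : V → V → Prop) (c : V → ℝ) (hc : Function.Injective c)
    (n : ℕ) (hn : 2 ≤ n) (g : ℕ → V) (hclose : g 0 = g n)
    (hinj : ∀ i j, 1 ≤ i → i ≤ n → 1 ≤ j → j ≤ n → g i = g j → i = j)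
    (hcyc : ∀ i, i < n → E (g i) (g (i + 1)))
    (hmin : ∀ i, 1 ≤ i → i ≤ n → c (g n) ≤ c (g i))
    (k : ℕ) (hk1 : 1 ≤ k) (hkn : k ≤ n)
    (hsuffix : ∀ j, k ≤ j → j < n → c (g (j + 1)) < c (g j))
    (hleast : ∀ k', 1 ≤ k' → (∀ j, k' ≤ j → j < n → c (g (j + 1)) < c (g j)) → k ≤ k') :
    c (g (k - 1)) < c (g k) := by
  by_contra h
  push_neg at h
  rcases Nat.eq_or_lt_of_le hk1 with h1 | h1
  · -- k = 1
    have hk : k = 1 := h1.symm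
    subst hk
    simp only [Nat.sub_self] at h
    rw [hclose] at h
    have hle := hmin 1 le_rfl hkn
    have heq : c (g n) = c (g 1) := le_antisymm hle h
    have hgeq : g n = g 1 := hc heq
    have := hinj n 1 (by omega) le_rfl le_rfl hkn hgeq
    omega
  · -- k ≥ 2
    have hkm1 : 1 ≤ k - 1 := by omega
    have hne : g k ≠ g (k - 1) := by
      intro hgeq
      have := hinj k (k - 1) hk1 hkn hkm1 (by omega) hgeq
      omega
    have hstrict : c (g k) < c (g (k - 1)) :=
      lt_of_le_of_ne h (fun hceq => hne (hc hceq))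
    have hsuf' : ∀ j, k - 1 ≤ j → j < n → c (g (j + 1)) < c (g j) := by
      intro j hj hjn
      rcases Nat.eq_or_lt_of_le hj with hj' | hj'
      · have hj1 : j = k - 1 := hj'.symm
        have hjk : j + 1 = k := by omega
        rw [hjk, hj1]
        exact hstrict
      · exact hsuffix j (by omega) hjn
    have := hleast (k - 1) hkm1 hsuf'
    omega
end

section
/- Suppose every vertex T of a finite directed graph (with distinct real commit timestamps, edges classified into forward and back edges by timestamp order) satisfies the SSN condition: for every in-edge U ← T with c(U) < c(T), c(U) < π(T). Then the graph admits a topological ordering, i.e., a linear extension of the edge relation (the execution is serializable). -/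
section Aux
variable {V : Type*} [Fintype V] (E : V → V → Prop) (c : V → ℝ)

lemma piSSN_le_c (T : V) : piSSN E c T ≤ c T :=
  csInf_le ((Set.toFinite _).bddBelow) ⟨T, Relation.ReflTransGen.refl, rfl⟩

lemma piSSN_mono {T U : V} (h : BackEdge E c T U) : piSSN E c T ≤ piSSN E c U := by
  refine csInf_le_csInf ((Set.toFinite _).bddBelow)
    ⟨c U, U, Relation.ReflTransGen.refl, rfl⟩ ?_
  rintro x ⟨W, hW, rfl⟩
  exact ⟨W, (Relation.ReflTransGen.single h).trans hW, rfl⟩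

end Aux

/-- If every vertex of a finite (self-loop-free) dependency graph with distinct
timestamps satisfies the SSN condition — every in-edge `U ← T` with `c U < c T` has
`c U < π(T)` — then the graph admits a topological ordering (a linear extension of
the edge relation): the execution is serializable. -/
theorem ssn_implies_topological_order {V : Type*} [Fintype V]
    (E : V → V → Prop) (c : V → ℝ) (hc : Function.Injective c)
    (hirr : ∀ X, ¬ E X X)
    (hok : ∀ T U, E U T → c U < c T → c U < piSSN E c T) :
    ∃ f : V → ℕ, Function.Injective f ∧ ∀ a b, E a b → f a < f b := by
  classical
  -- single-edge step
  have step : ∀ a b : V, E a b →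
      piSSN E c a < piSSN E c b ∨ (piSSN E c a ≤ piSSN E c b ∧ c b < c a) := by
    intro a b hab
    have hne : a ≠ b := fun h => hirr a (h ▸ hab)
    rcases lt_or_gt_of_ne (hc.ne hne) with h | h
    · left
      exact lt_of_le_of_lt (piSSN_le_c E c a) (hok b a hab h)
    · right
      exact ⟨piSSN_mono E c ⟨hab, h⟩, h⟩
  have key : ∀ a b : V, Relation.TransGen E a b →
      piSSN E c a ≤ piSSN E c b ∧ (piSSN E c a < piSSN E c b ∨ c b < c a) := by
    intro a b h
    induction h with
    | single hab =>
        rcases step _ _ hab with h | ⟨h1, h2⟩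
        · exact ⟨le_of_lt h, Or.inl h⟩
        · exact ⟨h1, Or.inr h2⟩
    | tail _ hbc ih =>
        rcases step _ _ hbc with h | ⟨h1, h2⟩
        · exact ⟨le_trans ih.1 (le_of_lt h), Or.inl (lt_of_le_of_lt ih.1 h)⟩
        · refine ⟨le_trans ih.1 h1, ?_⟩
          rcases ih.2 with h' | h'
          · exact Or.inl (lt_of_lt_of_le h' h1)
          · exact Or.inr (lt_trans h2 h')
  have acyc : ∀ a : V, ¬ Relation.TransGen E a a := by
    intro a h
    rcases (key a a h).2 with h' | h'
    · exact lt_irrefl _ h'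
    · exact lt_irrefl _ h'
  -- partial order extending E
  set s : V → V → Prop := fun a b => Relation.TransGen E a b ∨ a = b with hs
  haveI : IsPartialOrder V s := by
    refine { refl := fun a => Or.inr rfl, trans := ?_, antisymm := ?_ }
    · rintro a b d (hab | rfl) (hbd | rfl)
      · exact Or.inl (hab.trans hbd)
      · exact Or.inl hab
      · exact Or.inl hbd
      · exact Or.inr rfl
    · rintro a b (hab | h1) (hba | h2)
      · exact absurd (hab.trans hba) (acyc a)
      · exact h2.symm
      · exact h1
      · exact h1
  obtain ⟨t, ht, hst⟩ := extend_partialOrder s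
  -- f counts strict t-predecessors
  refine ⟨fun a => (Finset.univ.filter fun x => t x a ∧ x ≠ a).card, ?_, ?_⟩
  swap
  · intro a b hab
    have hne : a ≠ b := fun h => hirr a (h ▸ hab)
    have htab : t a b := hst _ _ (Or.inl (Relation.TransGen.single hab))
    apply Finset.card_lt_card
    constructor
    · intro x hx
      simp only [Finset.mem_filter, Finset.mem_univ, true_and] at hx ⊢
      refine ⟨ht.trans _ _ _ hx.1 htab, ?_⟩
      rintro rfl
      exact hne (ht.antisymm _ _ htab hx.1)
    · intro hsub
      have : a ∈ Finset.univ.filter fun x => t x b ∧ x ≠ b := by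
        simp [htab, hne]
      have := hsub this
      simp at this
  · intro a b hfe
    by_contra hne
    dsimp only at hfe
    rcases ht.total a b with htab | htba
    · have : a ≠ b := hne
      -- a strict pred of b, so card a < card b, contradiction with equality
      have hlt : (Finset.univ.filter fun x => t x a ∧ x ≠ a).card
          < (Finset.univ.filter fun x => t x b ∧ x ≠ b).card := by
        apply Finset.card_lt_card
        constructor
        · intro x hx
          simp only [Finset.mem_filter, Finset.mem_univ, true_and] at hx ⊢
          refine ⟨ht.trans _ _ _ hx.1 htab, ?_⟩
          rintro rfl
          exact this (ht.antisymm _ _ htab hx.1)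
        · intro hsub
          have hmem : a ∈ Finset.univ.filter fun x => t x b ∧ x ≠ b := by
            simp [htab, this]
          have := hsub hmem
          simp at this
      omega
    · have : b ≠ a := fun h => hne h.symm
      have hlt : (Finset.univ.filter fun x => t x b ∧ x ≠ b).card
          < (Finset.univ.filter fun x => t x a ∧ x ≠ a).card := by
        apply Finset.card_lt_card
        constructor
        · intro x hx
          simp only [Finset.mem_filter, Finset.mem_univ, true_and] at hx ⊢
          refine ⟨ht.trans _ _ _ hx.1 htba, ?_⟩
          rintro rfl
          exact this (ht.antisymm _ _ htba hx.1)
        · intro hsub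
          have hmem : b ∈ Finset.univ.filter fun x => t x a ∧ x ≠ a := by
            simp [htba, this]
          have := hsub hmem
          simp at this
      omega
end

section
/- A non-repeatable read implies a 2-cycle: if transaction T reads version V_i of a record and later reads a different, newer version V_j (j > i) of the same record created by committed transaction W, then the dependency graph contains the cycle T →ʳʷ W and W →ʷʳ T, hence is not serializable. -/
/-- A non-repeatable read implies a dependency cycle. `Dep a b` means `a` must be
serialized before `b`. `T` read version `V_i` of a record, giving a read
anti-dependency `Dep T (creator (i+1))`; successive overwrites give
`Dep (creator k) (creator (k+1))`; `W = creator j` with `i < j` created the newer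
version `V_j` that `T` also read, giving `Dep W T`. Then the dependency graph contains
a directed cycle through `T` and `W`, hence is not serializable. -/
theorem non_repeatable_read_cycle {Txn : Type*}
    (Dep : Txn → Txn → Prop) (T W : Txn)
    (creator : ℕ → Txn) (i j : ℕ) (hij : i < j) (hW : creator j = W)
    (hread : Dep T (creator (i + 1)))
    (hchain : ∀ k, i + 1 ≤ k → k < j → Dep (creator k) (creator (k + 1)))
    (hwr : Dep W T) :
    Relation.TransGen Dep T W ∧ Relation.TransGen Dep W T ∧
      Relation.TransGen Dep T T := by
  have key : ∀ k, i + 1 ≤ k → k ≤ j → Relation.TransGen Dep T (creator k) := by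
    intro k hk1 hk2
    induction k with
    | zero => omega
    | succ n ih =>
      rcases Nat.lt_or_ge n (i+1) with h | h
      · have : n = i := by omega
        subst this
        exact Relation.TransGen.single hread
      · exact (ih h (by omega)).tail (hchain n h (by omega))
  have hTW : Relation.TransGen Dep T W := hW ▸ key j hij le_rfl
  exact ⟨hTW, Relation.TransGen.single hwr, hTW.tail hwr⟩
end

section
/- For committed transactions, π is stable: adding to the dependency graph a new vertex X with larger commit timestamp than all existing vertices, together with edges between X and existing vertices, does not change π(T) for any previously existing vertex T. -/
/-- `π` is stable for committed transactions: if the graph `E'` extends `E` by a new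
vertex `X` whose commit timestamp exceeds that of every old vertex (`E` has no edges
incident to `X`, and `E'` agrees with `E` away from `X`), then `π` is unchanged on
every old vertex `T ≠ X`. -/
theorem pi_stable_under_new_max_vertex {V : Type*} [Fintype V]
    (E E' : V → V → Prop) (c : V → ℝ) (hc : Function.Injective c) (X : V)
    (hold : ∀ a b, E a b → a ≠ X ∧ b ≠ X)
    (hext : ∀ a b, a ≠ X → b ≠ X → (E' a b ↔ E a b))
    (hmax : ∀ a, a ≠ X → c a < c X) :
    ∀ T, T ≠ X → piSSN E' c T = piSSN E c T := by
  intro T hT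
  have key : {U | Relation.ReflTransGen (BackEdge E' c) T U}
      = {U | Relation.ReflTransGen (BackEdge E c) T U} := by
    ext U
    simp only [Set.mem_setOf_eq]
    constructor
    · intro h
      have : Relation.ReflTransGen (BackEdge E c) T U ∧ U ≠ X := by
        induction h with
        | refl => exact ⟨Relation.ReflTransGen.refl, hT⟩
        | tail _ hbc ih =>
          rcases ih with ⟨hr, hb⟩
          have hcne : _ ≠ X := fun h => absurd (h ▸ hbc.2) (not_lt.2 (hmax _ hb).le)
          exact ⟨hr.tail ⟨(hext _ _ hb hcne).1 hbc.1, hbc.2⟩, hcne⟩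
      exact this.1
    · intro h
      induction h with
      | refl => exact Relation.ReflTransGen.refl
      | tail _ hbc ih =>
        obtain ⟨h1, h2⟩ := hold _ _ hbc.1
        exact ih.tail ⟨(hext _ _ h1 h2).2 hbc.1, hbc.2⟩
  unfold piSSN
  rw [key]
end
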